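/- Let A ∈ ℤ^{m×n} with 1 ≤ m < n satisfy the regularity assumptions, let v = A·1, and let L_A^⊥ = {z ∈ ℤ^n : A z = 0}. Then the covering radius satisfies μ_1(P(A, v) − 1, L_A^⊥) ≤ ((n−m)/2)·√(det(A Aᵀ)), where P(A, v) − 1 is the translate of the knapsack polytope P(A, v) by the negative of the all-ones vector. -/

import Mathlib

/-! Since the m×m minors of `A` have gcd 1, some minor `B = A[·, g]` is nonzero. For every
column `j` outside `g`, Cramer's rule gives the integer kernel vector
`z_j = det B • e_j - ∑ₖ (adj B · aⱼ)ₖ • e_{g k}` of `A`. Its entries are m×m minors of `A` up to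
sign, and every minor `B'` satisfies `(det B')² ≤ det (A Aᵀ)`: with `C` the remaining columns and
`W = B⁻¹ C` one has `A Aᵀ = B (1 + W Wᵀ) Bᵀ` and `det (1 + W Wᵀ) ≥ 1`. A real kernel vector `x`
equals `∑ⱼ (xⱼ / det B) z_j`; rounding the coefficients yields a lattice point `y` with
`‖x - y‖_∞ ≤ (n - m)/2 · √det (A Aᵀ)`, and `‖x - y‖_∞ ≤ μ` says exactly that
`x - y ∈ μ (P(A, v) - 1)`. -/

open scoped BigOperators
open Matrix

noncomputable section

/-- The real matrix obtained from an integer matrix. -/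
def Rmat {m n : ℕ} (A : Matrix (Fin m) (Fin n) ℤ) : Matrix (Fin m) (Fin n) ℝ :=
  A.map (Int.cast : ℤ → ℝ)

/-- The real vector obtained from an integer vector. -/
def Rvec {m : ℕ} (b : Fin m → ℤ) : Fin m → ℝ := fun i => (b i : ℝ)

/-- The knapsack polytope P(A,b) = {x ≥ 0 : A x = b}. -/
def knap {m n : ℕ} (A : Matrix (Fin m) (Fin n) ℤ) (b : Fin m → ℝ) : Set (Fin n → ℝ) :=
  {x | (∀ i, 0 ≤ x i) ∧ (Rmat A).mulVec x = b}

/-- The set F_s(A) of integer vectors b for which P(A,b) contains at least s integer points. -/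
def feas {m n : ℕ} (s : ℕ) (A : Matrix (Fin m) (Fin n) ℤ) : Set (Fin m → ℤ) :=
  {b | s ≤ Set.ncard {x : Fin n → ℤ | (∀ i, 0 ≤ x i) ∧ A.mulVec x = b}}

/-- The cone generated by the columns of A. -/
def coneOf {m n : ℕ} (A : Matrix (Fin m) (Fin n) ℤ) : Set (Fin m → ℝ) :=
  {y | ∃ x : Fin n → ℝ, (∀ i, 0 ≤ x i) ∧ (Rmat A).mulVec x = y}

/-- The generalized diagonal s-Frobenius number g_s(A, w). -/
def gDiag {m n : ℕ} (s : ℕ) (A : Matrix (Fin m) (Fin n) ℤ) (w : Fin m → ℝ) : ℝ :=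
  sInf {t : ℝ | 0 ≤ t ∧
    ∀ b : Fin m → ℤ, Rvec b ∈ interior ((fun c => t • w + c) '' coneOf A) → b ∈ feas s A}

/-- v = A·1 is the sum of the columns of A (as a real vector). -/
def vA {m n : ℕ} (A : Matrix (Fin m) (Fin n) ℤ) : Fin m → ℝ :=
  (Rmat A).mulVec (fun _ => 1)

/-- The diagonal s-Frobenius number g_s(A) = g_s(A, A·1). -/
def gFrob {m n : ℕ} (s : ℕ) (A : Matrix (Fin m) (Fin n) ℤ) : ℝ := gDiag s A (vA A)

/-- The regularity assumptions: the m×m minors of A have gcd 1, and the only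
nonnegative real solution of A x = 0 is x = 0. -/
def regular {m n : ℕ} (A : Matrix (Fin m) (Fin n) ℤ) : Prop :=
  Finset.univ.gcd (fun I : Fin m ↪ Fin n => (A.submatrix id ⇑I).det) = 1 ∧
  ∀ x : Fin n → ℝ, (∀ i, 0 ≤ x i) → (Rmat A).mulVec x = 0 → x = 0

/-- The s-covering radius of K with respect to L: the smallest μ > 0 such that every
point of the real span of L lies in y + μK for at least s distinct y ∈ L. -/
def muCov {N : ℕ} (s : ℕ) (K L : Set (Fin N → ℝ)) : ℝ :=
  sInf {μ : ℝ | 0 < μ ∧ ∀ x ∈ Submodule.span ℝ L,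
    ∃ T : Finset (Fin N → ℝ), ↑T ⊆ L ∧ s ≤ T.card ∧ ∀ y ∈ T, ∃ k ∈ K, x = y + μ • k}

/-- The set of absolute values of m×m minors of A. -/
def minorAbs {m n : ℕ} (A : Matrix (Fin m) (Fin n) ℤ) : Set ℤ :=
  {d | ∃ I : Fin m ↪ Fin n, d = |(A.submatrix id ⇑I).det|}

/-- m(A): the minimal absolute m×m minor of A. -/
def mMin {m n : ℕ} (A : Matrix (Fin m) (Fin n) ℤ) : ℤ := sInf (minorAbs A)

/-- M(A): the maximal absolute m×m minor of A. -/
def mMax {m n : ℕ} (A : Matrix (Fin m) (Fin n) ℤ) : ℤ := sSup (minorAbs A)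

/-- The lattice L_A^⊥ = {z ∈ ℤ^n : A z = 0}, viewed as a subset of ℝ^n. -/
def kerLat {m n : ℕ} (A : Matrix (Fin m) (Fin n) ℤ) : Set (Fin n → ℝ) :=
  {x | ∃ z : Fin n → ℤ, A.mulVec z = 0 ∧ x = Rvec z}

/-- √(det (A Aᵀ)). -/
def sqrtDet {m n : ℕ} (A : Matrix (Fin m) (Fin n) ℤ) : ℝ :=
  Real.sqrt (((A * Aᵀ).det : ℤ) : ℝ)

/-- The s-Frobenius number of a positive primitive integer vector. -/
def sFrob {n : ℕ} (s : ℕ) (a : Fin n → ℤ) : ℤ :=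
  sSup {b : ℤ | Set.ncard {x : Fin n → ℤ | (∀ i, 0 ≤ x i) ∧ ∑ i, a i * x i = b} < s}

/-- The full-rank lattice in ℝ^d with basis the columns of an invertible matrix B. -/
def latSet {d : ℕ} (B : Matrix (Fin d) (Fin d) ℝ) : Set (Fin d → ℝ) :=
  {x | ∃ z : Fin d → ℤ, x = B.mulVec (fun i => (z i : ℝ))}

/-- The absolute s-inhomogeneous minimum ϑ_s(K) = inf_L μ_s(K,L)/det(L)^{1/d}. -/
def theta (s d : ℕ) (K : Set (Fin d → ℝ)) : ℝ :=
  sInf {r : ℝ | ∃ B : Matrix (Fin d) (Fin d) ℝ, B.det ≠ 0 ∧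
    r = muCov s K (latSet B) / |B.det| ^ ((1 : ℝ) / d)}

/-- The standard simplex S_d ⊂ ℝ^d. -/
def stdSimplex' (d : ℕ) : Set (Fin d → ℝ) :=
  {x | (∀ i, 0 ≤ x i) ∧ ∑ i, x i ≤ 1}

open Function Finset

theorem Function.Injective.update_of_notMem_range {α β : Type*} [DecidableEq α] {g : α → β}
    (hg : Injective g) {b : β} (hb : b ∉ Set.range g) (a : α) : Injective (update g a b) := by
  intro x y hxy
  have hb' : ∀ x, g x ≠ b := fun x h => hb ⟨x, h⟩
  by_cases hx : x = a <;> by_cases hy : y = a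
  all_goals simp_all [hg.eq_iff]

namespace Matrix

section Gram

variable {m n : Type*} [Fintype m] [Fintype n] [DecidableEq n]

theorem mul_transpose_eq_add_submatrix {α : Type*} [NonUnitalNonAssocSemiring α]
    (R : Matrix m n α) {g : m → n} (hg : Injective g) :
    R * Rᵀ = R.submatrix id g * (R.submatrix id g)ᵀ +
      R.submatrix id ((↑) : {c // c ∉ univ.image g} → n) *
        (R.submatrix id ((↑) : {c // c ∉ univ.image g} → n))ᵀ := by
  ext i k
  simp only [mul_apply, add_apply, transpose_apply, submatrix_apply, id]
  rw [← sum_add_sum_compl (univ.image g), sum_image hg.injOn]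
  congr 1
  exact sum_subtype _ (fun _ => mem_compl) fun c => R i c * R k c

variable [DecidableEq m]

theorem PosSemidef.one_le_det_one_add {Y : Matrix m m ℝ} (hY : Y.PosSemidef) :
    1 ≤ (1 + Y).det := by
  have hdet : (1 + Y).det = ∏ i, (1 + hY.1.eigenvalues i) := by
    -- evaluate `charpoly Y = ∏ (X - λᵢ)` at `-1`, where the left side is `det (-(1 + Y))`
    have h := congrArg (Polynomial.eval (-1)) hY.1.charpoly_eq
    rw [eval_charpoly, Polynomial.eval_prod, map_neg, map_one, ← neg_add', det_neg] at h
    simp only [Polynomial.eval_sub, Polynomial.eval_X, Polynomial.eval_C,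
      RCLike.ofReal_real_eq_id, id, ← neg_add', Finset.prod_neg] at h
    simpa using h
  rw [hdet]
  exact one_le_prod fun i _ => le_add_of_nonneg_right (hY.eigenvalues_nonneg i)

theorem det_submatrix_sq_le_det_mul_transpose (R : Matrix m n ℝ) {g : m → n}
    (hg : Injective g) : (R.submatrix id g).det ^ 2 ≤ (R * Rᵀ).det := by
  set B := R.submatrix id g
  set C := R.submatrix id ((↑) : {c // c ∉ univ.image g} → n)
  rcases eq_or_ne B.det 0 with hB | hB
  · simpa [hB] using (posSemidef_self_mul_conjTranspose R).det_nonneg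
  set W := B⁻¹ * C
  have hBW : B * W = C := by
    rw [← Matrix.mul_assoc, mul_nonsing_inv B (isUnit_iff_ne_zero.mpr hB), Matrix.one_mul]
  have hfactor : R * Rᵀ = B * (1 + W * Wᵀ) * Bᵀ := by
    rw [mul_transpose_eq_add_submatrix R hg]
    change B * Bᵀ + C * Cᵀ = _
    rw [← hBW]
    simp only [transpose_mul, Matrix.mul_add, Matrix.add_mul, Matrix.mul_one, Matrix.mul_assoc]
  have hW : 1 ≤ (1 + W * Wᵀ).det := by
    simpa using (posSemidef_self_mul_conjTranspose W).one_le_det_one_add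
  rw [hfactor, det_mul, det_mul, det_transpose]
  nlinarith [sq_nonneg B.det]

theorem det_submatrix_sq_le_det_mul_transpose_int (A : Matrix m n ℤ) {g : m → n}
    (hg : Injective g) : (A.submatrix id g).det ^ 2 ≤ (A * Aᵀ).det := by
  have h := det_submatrix_sq_le_det_mul_transpose (A.map (Int.castRingHom ℝ)) hg
  rw [submatrix_map, ← transpose_map, ← Matrix.map_mul, ← RingHom.mapMatrix_apply,
    ← RingHom.mapMatrix_apply, ← RingHom.map_det, ← RingHom.map_det, eq_intCast,
    eq_intCast] at h
  exact_mod_cast h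

end Gram

section Support

variable {R : Type*} [CommRing R] {m n : Type*} [Fintype m] [Fintype n] [DecidableEq n]

theorem mulVec_sum_single (A : Matrix m n R) (g : m → n) (w : m → R) :
    A *ᵥ ∑ k, Pi.single (g k) (w k) = A.submatrix id g *ᵥ w := by
  ext i
  simp only [mulVec, dotProduct, Finset.sum_apply, Finset.mul_sum, Pi.single_apply, mul_ite,
    mul_zero]
  rw [sum_comm]
  simp

theorem mulVec_eq_submatrix_mulVec_comp (A : Matrix m n R) {g : m → n} (hg : Injective g)
    {u : n → R} (hu : ∀ c ∉ Set.range g, u c = 0) :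
    A *ᵥ u = A.submatrix id g *ᵥ (u ∘ g) := by
  ext i
  simp only [mulVec, dotProduct, submatrix_apply, id_eq, Function.comp_apply]
  rw [← sum_image (f := fun c => A i c * u c) hg.injOn]
  refine (sum_subset (subset_univ _) fun c _ hc => ?_).symm
  rw [hu c (by simpa using hc), mul_zero]

theorem eq_zero_of_mulVec_eq_zero_of_notMem_range [DecidableEq m] {K : Type*} [Field K]
    {A : Matrix m n K} {g : m → n} (hg : Injective g) (hB : (A.submatrix id g).det ≠ 0)
    {u : n → K} (hu : A *ᵥ u = 0) (hoff : ∀ c ∉ Set.range g, u c = 0) : u = 0 := by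
  rw [mulVec_eq_submatrix_mulVec_comp A hg hoff] at hu
  have hcomp := eq_zero_of_mulVec_eq_zero hB hu
  ext c
  by_cases hc : c ∈ Set.range g
  · obtain ⟨k, rfl⟩ := hc
    exact congrFun hcomp k
  · exact hoff c hc

end Support

section KernelVec

variable {R : Type*} [CommRing R] {m n : Type*} [Fintype m] [DecidableEq m] [DecidableEq n]

def kernelVec (A : Matrix m n R) (g : m → n) (j : n) : n → R :=
  Pi.single j (A.submatrix id g).det -
    ∑ k, Pi.single (g k) (((A.submatrix id g).adjugate *ᵥ A.col j) k)

theorem kernelVec_map {S : Type*} [CommRing S] (f : R →+* S) (A : Matrix m n R) (g : m → n)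
    (j : n) : (A.map f).kernelVec g j = f ∘ A.kernelVec g j := by
  have hadj := f.map_adjugate (A.submatrix id g)
  simp only [RingHom.mapMatrix_apply] at hadj
  ext c
  simp [kernelVec, submatrix_map, Pi.single_apply, apply_ite f, RingHom.map_det,
    RingHom.map_mulVec, ← hadj]
  rfl

theorem kernelVec_apply_of_notMem_range (A : Matrix m n R) (g : m → n) (j : n) {c : n}
    (hc : c ∉ Set.range g) :
    A.kernelVec g j c = (Pi.single j (A.submatrix id g).det : n → R) c := by
  have hc' : ∀ k, c ≠ g k := fun k h => hc ⟨k, h.symm⟩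
  simp [kernelVec, Pi.single_apply, hc']

theorem kernelVec_apply_comp (A : Matrix m n R) {g : m → n} (hg : Injective g) {j : n}
    (hj : j ∉ Set.range g) (k : m) :
    A.kernelVec g j (g k) = -(A.submatrix id (update g k j)).det := by
  have hupd : (A.submatrix id g).updateCol k (A.col j) = A.submatrix id (update g k j) := by
    ext i l
    rcases eq_or_ne l k with rfl | hl <;> simp [*]
  have hjk : g k ≠ j := fun h => hj ⟨k, h⟩
  simp [kernelVec, Pi.single_apply, hg.eq_iff, hjk, ← cramer_eq_adjugate_mulVec, cramer_apply,
    hupd]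

variable [Fintype n]

theorem mulVec_kernelVec (A : Matrix m n R) (g : m → n) (j : n) :
    A *ᵥ A.kernelVec g j = 0 := by
  rw [kernelVec, mulVec_sub, mulVec_sum_single, mulVec_mulVec, mul_adjugate, smul_mulVec,
    one_mulVec]
  ext i
  simp [mul_comm]

theorem eq_sum_smul_kernelVec {K : Type*} [Field K] {A : Matrix m n K} {g : m → n}
    (hg : Injective g) (hB : (A.submatrix id g).det ≠ 0) {x : n → K} (hx : A *ᵥ x = 0) :
    x = ∑ j ∈ (univ.image g)ᶜ, (x j / (A.submatrix id g).det) • A.kernelVec g j := by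
  rw [← sub_eq_zero]
  refine eq_zero_of_mulVec_eq_zero_of_notMem_range hg hB ?_ fun c hc => ?_
  · simp [mulVec_sub, mulVec_sum, mulVec_smul, mulVec_kernelVec, hx]
  · have hc' : c ∈ (univ.image g)ᶜ := by simpa using hc
    simp only [Pi.sub_apply, Finset.sum_apply, Pi.smul_apply, smul_eq_mul,
      kernelVec_apply_of_notMem_range A g _ hc, Pi.single_apply]
    simp [hc', hB]

theorem kernelVec_sq_le (A : Matrix m n ℤ) {g : m → n} (hg : Injective g) {j : n}
    (hj : j ∉ Set.range g) (c : n) : A.kernelVec g j c ^ 2 ≤ (A * Aᵀ).det := by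
  have hminor {h : m → n} (hh : Injective h) := det_submatrix_sq_le_det_mul_transpose_int A hh
  by_cases hc : c ∈ Set.range g
  · obtain ⟨k, rfl⟩ := hc
    rw [kernelVec_apply_comp A hg hj, neg_sq]
    exact hminor (hg.update_of_notMem_range hj k)
  · rw [kernelVec_apply_of_notMem_range A g j hc, Pi.single_apply]
    split_ifs
    · exact hminor hg
    · simpa using (sq_nonneg _).trans (hminor hg)

theorem exists_mulVec_eq_zero_abs_sub_le (A : Matrix m n ℤ) {g : m → n} (hg : Injective g)
    (hB : (A.submatrix id g).det ≠ 0) {x : n → ℝ} (hx : A.map ((↑) : ℤ → ℝ) *ᵥ x = 0) :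
    ∃ z : n → ℤ, A *ᵥ z = 0 ∧ ∀ c,
      |x c - z c| ≤ ((Fintype.card n : ℝ) - Fintype.card m) / 2 * √((A * Aᵀ).det : ℝ) := by
  set d : ℝ := ((A.submatrix id g).det : ℝ)
  have hcard : (#(univ.image g)ᶜ : ℝ) = Fintype.card n - Fintype.card m := by
    rw [card_compl, card_image_of_injective _ hg, card_univ,
      Nat.cast_sub (Fintype.card_le_of_injective g hg)]
  have hd : ((A.map (Int.castRingHom ℝ)).submatrix id g).det = d := by
    simp [d, submatrix_map, Int.cast_det]
  have hrep := eq_sum_smul_kernelVec (A := A.map (Int.castRingHom ℝ)) hg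
    (hd ▸ Int.cast_ne_zero.mpr hB) hx
  simp only [hd, kernelVec_map] at hrep
  set J := (univ.image g)ᶜ
  refine ⟨∑ j ∈ J, round (x j / d) • A.kernelVec g j, ?_, fun c => ?_⟩
  · rw [mulVec_sum]
    exact sum_eq_zero fun j _ => by rw [mulVec_smul, mulVec_kernelVec, smul_zero]
  have hbound : ∀ j ∈ J, |(A.kernelVec g j c : ℝ)| ≤ √((A * Aᵀ).det : ℝ) := fun j hj =>
    Real.abs_le_sqrt (by exact_mod_cast A.kernelVec_sq_le hg (by simpa [J] using hj) c)
  calc |x c - ↑((∑ j ∈ J, round (x j / d) • A.kernelVec g j) c)|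
      = |∑ j ∈ J, (x j / d - round (x j / d)) * A.kernelVec g j c| := by
        rw [congrFun hrep c]
        simp [sub_mul, sum_sub_distrib]
    _ ≤ ∑ j ∈ J, |(x j / d - round (x j / d)) * A.kernelVec g j c| := abs_sum_le_sum_abs _ _
    _ ≤ ∑ j ∈ J, 1 / 2 * √((A * Aᵀ).det : ℝ) := sum_le_sum fun j hj => by
        rw [abs_mul]
        exact mul_le_mul (abs_sub_round _) (hbound j hj) (abs_nonneg _) (by norm_num)
    _ = _ := by rw [sum_const, nsmul_eq_mul, hcard]; ring

end KernelVec

end Matrix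

theorem Rmat_mulVec_Rvec {m n : ℕ} (A : Matrix (Fin m) (Fin n) ℤ) (z : Fin n → ℤ) :
    Rmat A *ᵥ Rvec z = Rvec (A *ᵥ z) := by
  ext i
  simp [Rmat, Rvec, mulVec, dotProduct]

theorem Rvec_zero {m : ℕ} : Rvec (0 : Fin m → ℤ) = 0 :=
  funext fun _ => Int.cast_zero

theorem mulVec_eq_zero_of_mem_span_kerLat {m n : ℕ} {A : Matrix (Fin m) (Fin n) ℤ}
    {x : Fin n → ℝ} (hx : x ∈ Submodule.span ℝ (kerLat A)) : Rmat A *ᵥ x = 0 := by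
  have hle : Submodule.span ℝ (kerLat A) ≤ LinearMap.ker (Rmat A).mulVecLin := by
    rw [Submodule.span_le]
    rintro _ ⟨z, hz, rfl⟩
    simp [Rmat_mulVec_Rvec, hz, Rvec_zero]
  simpa using hle hx

theorem inv_smul_mem_knap_sub_one {m n : ℕ} {A : Matrix (Fin m) (Fin n) ℤ} {w : Fin n → ℝ}
    (hw : Rmat A *ᵥ w = 0) {μ : ℝ} (hμ : 0 < μ) (hle : ∀ c, |w c| ≤ μ) :
    μ⁻¹ • w ∈ (fun x => x - fun _ => (1 : ℝ)) '' knap A (vA A) := by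
  refine ⟨μ⁻¹ • w + fun _ => 1, ⟨fun c => ?_, ?_⟩, by simp⟩
  · have : -1 ≤ μ⁻¹ * w c := by
      rw [le_inv_mul_iff₀ hμ]
      linarith [neg_abs_le (w c), hle c]
    simp only [Pi.add_apply, Pi.smul_apply, smul_eq_mul]
    linarith
  · rw [mulVec_add, mulVec_smul, hw, smul_zero, zero_add]
    rfl

theorem muCov_one_le {N : ℕ} {K L : Set (Fin N → ℝ)} {μ : ℝ} (hμ : 0 < μ)
    (h : ∀ x ∈ Submodule.span ℝ L, ∃ y ∈ L, ∃ k ∈ K, x = y + μ • k) : muCov 1 K L ≤ μ := by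
  refine csInf_le ⟨0, fun _ hν => hν.1.le⟩ ⟨hμ, fun x hx => ?_⟩
  obtain ⟨y, hy, k, hk, rfl⟩ := h x hx
  exact ⟨{y}, by simpa using hy, by simp, fun y' hy' => ⟨k, hk, by rw [mem_singleton.mp hy']⟩⟩

theorem stmt_9_general {m n : ℕ} (hmn : m < n)
    (A : Matrix (Fin m) (Fin n) ℤ) (hA : regular A) :
    muCov 1 ((fun x => x - fun _ => (1 : ℝ)) '' knap A (vA A)) (kerLat A) ≤
      ((n : ℝ) - m) / 2 * sqrtDet A := by
  obtain ⟨g, hg⟩ : ∃ g : Fin m ↪ Fin n, (A.submatrix id g).det ≠ 0 := by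
    by_contra! h
    simpa [gcd_eq_zero_iff.mpr fun I _ => h I] using hA.1
  have hdet : (0 : ℝ) < (A * Aᵀ).det := by
    exact_mod_cast (pow_two_pos_of_ne_zero hg).trans_le
      (det_submatrix_sq_le_det_mul_transpose_int A g.injective)
  have hμ : 0 < ((n : ℝ) - m) / 2 * sqrtDet A := by
    have : (m : ℝ) < n := by exact_mod_cast hmn
    exact mul_pos (by linarith) (Real.sqrt_pos.mpr hdet)
  refine muCov_one_le hμ fun x hx => ?_
  have hx0 := mulVec_eq_zero_of_mem_span_kerLat hx
  obtain ⟨z, hz, hxz⟩ := A.exists_mulVec_eq_zero_abs_sub_le g.injective hg hx0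
  refine ⟨Rvec z, ⟨z, hz, rfl⟩, _,
    inv_smul_mem_knap_sub_one (w := x - Rvec z) ?_ hμ fun c => ?_, ?_⟩
  · rw [mulVec_sub, hx0, Rmat_mulVec_Rvec, hz, Rvec_zero, sub_zero]
  · simpa [Rvec, sqrtDet] using hxz c
  · rw [smul_inv_smul₀ hμ.ne', add_sub_cancel]

/-- Upper bound for the covering radius of P(A,v) − 1 in terms of √det(AAᵀ) (Lemma 4). -/
theorem stmt_9 {m n : ℕ} (hm : 1 ≤ m) (hmn : m < n)
    (A : Matrix (Fin m) (Fin n) ℤ) (hA : regular A) :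
    muCov 1 ((fun x => x - fun _ => (1 : ℝ)) '' knap A (vA A)) (kerLat A) ≤
      ((n : ℝ) - m) / 2 * sqrtDet A :=
  stmt_9_general hmn A hA

end
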